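/- Let φ̂₁ : X̂ → ℝ be bounded and measurable, let φ̂_n := Σ_{j=0}^{n-1} κ̂ʲφ̂₁ be its κ̂-additive process, and set φ̄_n(x) := inf_{z ∈ π⁻¹(x)} φ̂_n(z). Assume each φ̄_n is measurable. Then the sequence (φ̄_n) is κ-superadditive: for all n, m ≥ 1 and every x ∈ X, φ̄_{n+m}(x) ≥ φ̄_n(x) + ∫ φ̄_m d(κⁿ x), where κⁿ is the n-fold composition of the kernel κ. -/

import Mathlib

open MeasureTheory ProbabilityTheory

noncomputable section

/-- The integral operator associated with a Markov kernel. -/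
def kernelOp {Z : Type*} [MeasurableSpace Z] (q : Kernel Z Z) (u : Z → ℝ) : Z → ℝ :=
  fun z => ∫ w, u w ∂(q z)

/-- `j`-fold application of the integral operator of a kernel. -/
def kernelOpIter {Z : Type*} [MeasurableSpace Z] (q : Kernel Z Z) : ℕ → (Z → ℝ) → (Z → ℝ)
  | 0 => fun u => u
  | n + 1 => fun u => kernelOp q (kernelOpIter q n u)

/-- The `n`-fold composition of a kernel, as a measure-valued map. -/
def kernelIterMeasure {Z : Type*} [MeasurableSpace Z] (q : Kernel Z Z) : ℕ → Z → Measure Z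
  | 0 => fun z => Measure.dirac z
  | n + 1 => fun z => (kernelIterMeasure q n z).bind (fun w => q w)

/-! The additive process satisfies `φ̂_{n+m} = φ̂_n + κ̂ⁿ φ̂_m`, and
`κ̂ⁿ φ̂_m z = ∫ φ̂_m d(κ̂ⁿ z) ≥ ∫ φ̄_m ∘ π d(κ̂ⁿ z) = ∫ φ̄_m d(κⁿ (π z))` because the intertwining
`π_* κ̂ = κ ∘ π` passes to the kernel powers. So every `z` in the fiber over `x` satisfies
`φ̂_{n+m} z ≥ φ̄_n x + ∫ φ̄_m d(κⁿ x)`, and it remains to take the infimum over that fiber. -/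

lemma integrable_of_abs_le {Z : Type*} [MeasurableSpace Z] {μ : Measure Z} [IsFiniteMeasure μ]
    {u : Z → ℝ} {C : ℝ} (hu : Measurable u) (hb : ∀ z, |u z| ≤ C) : Integrable u μ :=
  .of_bound hu.aestronglyMeasurable C (ae_of_all _ hb)

namespace ProbabilityTheory.Kernel

variable {Z : Type*} [MeasurableSpace Z]

instance isMarkovKernel_pow (q : Kernel Z Z) [IsMarkovKernel q] (n : ℕ) :
    IsMarkovKernel (q ^ n) := by
  induction n with
  | zero => rw [pow_zero]; exact inferInstanceAs (IsMarkovKernel Kernel.id)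
  | succ n ih => rw [pow_succ]; exact IsMarkovKernel.comp _ _

lemma pow_succ_apply (q : Kernel Z Z) (n : ℕ) (z : Z) :
    (q ^ (n + 1)) z = ((q ^ n) z).bind q := by
  rw [pow_succ']
  rfl

lemma map_pow_apply_eq_pow_apply {Y : Type*} [MeasurableSpace Y] {π : Z → Y}
    (hπ : Measurable π) {qh : Kernel Z Z} {q : Kernel Y Y} (h : ∀ z, (qh z).map π = q (π z))
    (n : ℕ) (z : Z) : ((qh ^ n) z).map π = (q ^ n) (π z) := by
  induction n generalizing z with
  | zero =>
    show (Kernel.id z).map π = Kernel.id (π z)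
    rw [id_apply, id_apply, Measure.map_dirac' hπ]
  | succ n ih =>
    rw [pow_succ_apply, pow_succ_apply, ← ih, Measure.map_comp _ _ hπ]
    ext s hs
    rw [Measure.bind_apply hs (Kernel.aemeasurable _), Measure.bind_apply hs q.aemeasurable,
      MeasureTheory.lintegral_map (q.measurable_coe hs) hπ]
    simp_rw [map_apply _ hπ, h]

end ProbabilityTheory.Kernel

section KernelOp

variable {Z : Type*} [MeasurableSpace Z] (q : Kernel Z Z)

lemma kernelIterMeasure_eq_pow (n : ℕ) : kernelIterMeasure q n = ⇑(q ^ n) := by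
  induction n with
  | zero => funext z; exact (Kernel.id_apply z).symm
  | succ n ih => funext z; rw [Kernel.pow_succ_apply, ← ih]; rfl

lemma kernelOpIter_eq_iterate (n : ℕ) : kernelOpIter q n = (kernelOp q)^[n] := by
  induction n with
  | zero => rfl
  | succ n ih => funext u; rw [Function.iterate_succ_apply', ← ih]; rfl

lemma kernelOpIter_add (a b : ℕ) (u : Z → ℝ) :
    kernelOpIter q (a + b) u = kernelOpIter q a (kernelOpIter q b u) := by
  simp only [kernelOpIter_eq_iterate, Function.iterate_add_apply]

variable [IsMarkovKernel q] {u : Z → ℝ} {C : ℝ}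

lemma kernelOpIter_eq_integral (hu : Measurable u) (hb : ∀ z, |u z| ≤ C) (n : ℕ) (z : Z) :
    kernelOpIter q n u z = ∫ w, u w ∂(q ^ n) z := by
  induction n generalizing z with
  | zero => exact (integral_dirac' u z hu.stronglyMeasurable).symm
  | succ n ih =>
    change kernelOp q _ z = ∫ w, u w ∂((q ^ n) ∘ₖ q) z
    rw [Kernel.integral_comp (integrable_of_abs_le hu hb)]
    exact integral_congr_ae (ae_of_all _ ih)

lemma measurable_kernelOpIter (hu : Measurable u) (hb : ∀ z, |u z| ≤ C) (n : ℕ) :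
    Measurable (kernelOpIter q n u) := by
  simp_rw [funext (kernelOpIter_eq_integral q hu hb n)]
  exact (hu.stronglyMeasurable.integral_kernel (κ := q ^ n)).measurable

lemma abs_kernelOpIter_le (hu : Measurable u) (hb : ∀ z, |u z| ≤ C) (n : ℕ) (z : Z) :
    |kernelOpIter q n u z| ≤ C := by
  simpa [kernelOpIter_eq_integral q hu hb] using
    norm_integral_le_of_norm_le_const (μ := (q ^ n) z) (f := u) (ae_of_all _ hb)

end KernelOp

section BirkhoffSum

variable {Z : Type*} [MeasurableSpace Z] (q : Kernel Z Z)

def kernelBirkhoffSum (φ : Z → ℝ) (n : ℕ) (z : Z) : ℝ :=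
  ∑ j ∈ Finset.range n, kernelOpIter q j φ z

variable [IsMarkovKernel q] {φ : Z → ℝ} {C : ℝ}

lemma measurable_kernelBirkhoffSum (hφ : Measurable φ) (hb : ∀ z, |φ z| ≤ C) (n : ℕ) :
    Measurable (kernelBirkhoffSum q φ n) :=
  Finset.measurable_sum _ fun j _ => measurable_kernelOpIter q hφ hb j

lemma abs_kernelBirkhoffSum_le (hφ : Measurable φ) (hb : ∀ z, |φ z| ≤ C) (n : ℕ) (z : Z) :
    |kernelBirkhoffSum q φ n z| ≤ n * C := by
  rw [kernelBirkhoffSum]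
  calc |∑ j ∈ Finset.range n, kernelOpIter q j φ z|
      ≤ ∑ j ∈ Finset.range n, |kernelOpIter q j φ z| := Finset.abs_sum_le_sum_abs _ _
    _ ≤ ∑ _j ∈ Finset.range n, C :=
        Finset.sum_le_sum fun j _ => abs_kernelOpIter_le q hφ hb j z
    _ = n * C := by simp

lemma kernelBirkhoffSum_add (hφ : Measurable φ) (hb : ∀ z, |φ z| ≤ C) (n m : ℕ) (z : Z) :
    kernelBirkhoffSum q φ (n + m) z
      = kernelBirkhoffSum q φ n z + ∫ w, kernelBirkhoffSum q φ m w ∂(q ^ n) z := by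
  have hint : ∀ j, Integrable (kernelOpIter q j φ) ((q ^ n) z) := fun j =>
    integrable_of_abs_le (measurable_kernelOpIter q hφ hb j) (abs_kernelOpIter_le q hφ hb j)
  simp only [kernelBirkhoffSum, Finset.sum_range_add,
    integral_finsetSum _ fun j _ => hint j]
  congr 1
  refine Finset.sum_congr rfl fun j _ => ?_
  rw [kernelOpIter_add, ← kernelOpIter_eq_integral q (measurable_kernelOpIter q hφ hb j)
    (abs_kernelOpIter_le q hφ hb j)]

end BirkhoffSum

section FiberInf

variable {Z Y : Type*} {π : Z → Y} {f : Z → ℝ}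

def fiberInf (π : Z → Y) (f : Z → ℝ) (y : Y) : ℝ :=
  sInf (f '' (π ⁻¹' {y}))

lemma bddBelow_range_of_abs_le {B : ℝ} (hb : ∀ z, |f z| ≤ B) : BddBelow (Set.range f) := by
  refine ⟨-B, ?_⟩
  rintro _ ⟨z, rfl⟩
  exact neg_le_of_abs_le (hb z)

lemma fiberInf_le (hf : BddBelow (Set.range f)) (z : Z) : fiberInf π f (π z) ≤ f z :=
  csInf_le (hf.mono (Set.image_subset_range _ _)) ⟨z, rfl, rfl⟩

lemma le_fiberInf (hπ : Function.Surjective π) {y : Y} {a : ℝ} (h : ∀ z, π z = y → a ≤ f z) :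
    a ≤ fiberInf π f y := by
  obtain ⟨z, hz⟩ := hπ y
  refine le_csInf ⟨f z, z, hz, rfl⟩ ?_
  rintro _ ⟨w, hw, rfl⟩
  exact h w hw

lemma abs_fiberInf_le (hπ : Function.Surjective π) {B : ℝ} (hb : ∀ z, |f z| ≤ B) (y : Y) :
    |fiberInf π f y| ≤ B := by
  obtain ⟨z, rfl⟩ := hπ y
  refine abs_le.2 ⟨le_fiberInf hπ fun w _ => (abs_le.1 (hb w)).1, ?_⟩
  exact (fiberInf_le (bddBelow_range_of_abs_le hb) z).trans (abs_le.1 (hb z)).2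

lemma integral_fiberInf_map_le [MeasurableSpace Z] [MeasurableSpace Y] (hπ : Measurable π)
    (hπs : Function.Surjective π) {μ : Measure Z} [IsFiniteMeasure μ] (hf : Measurable f)
    {B : ℝ} (hb : ∀ z, |f z| ≤ B) (hfi : Measurable (fiberInf π f)) :
    ∫ y, fiberInf π f y ∂μ.map π ≤ ∫ z, f z ∂μ := by
  rw [integral_map hπ.aemeasurable hfi.aestronglyMeasurable]
  refine integral_mono (integrable_of_abs_le (hfi.comp hπ) fun z => abs_fiberInf_le hπs hb _)
    (integrable_of_abs_le hf hb) (fiberInf_le (bddBelow_range_of_abs_le hb))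

end FiberInf

theorem fiberwise_inf_is_superadditive_general
    {Xh X : Type*} [MeasurableSpace Xh] [MeasurableSpace X]
    (π : Xh → X) (hπ_meas : Measurable π) (hπ_surj : Function.Surjective π)
    (κh : Kernel Xh Xh) [IsMarkovKernel κh]
    (κ : Kernel X X)
    (h_intertwine : ∀ z : Xh, (κh z).map π = κ (π z))
    (φ1 : Xh → ℝ) (hφ1_meas : Measurable φ1)
    (C : ℝ) (hφ1_bdd : ∀ z, |φ1 z| ≤ C)
    (φh : ℕ → Xh → ℝ)
    (hφh : ∀ n z, φh n z = ∑ j ∈ Finset.range n, kernelOpIter κh j φ1 z)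
    (φbar : ℕ → X → ℝ)
    (hφbar : ∀ n x, φbar n x = sInf (φh n '' (π ⁻¹' {x})))
    (hφbar_meas : ∀ n, Measurable (φbar n)) :
    ∀ n m : ℕ, 1 ≤ n → 1 ≤ m → ∀ x : X,
      φbar (n + m) x ≥ φbar n x + ∫ y, φbar m y ∂(kernelIterMeasure κ n x) := by
  intro n m _ _ x
  obtain rfl : φh = kernelBirkhoffSum κh φ1 := funext fun k => funext (hφh k)
  obtain rfl : φbar = fun k => fiberInf π (kernelBirkhoffSum κh φ1 k) :=
    funext fun k => funext (hφbar k)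
  have hmeas := measurable_kernelBirkhoffSum κh hφ1_meas hφ1_bdd
  have hbdd := abs_kernelBirkhoffSum_le κh hφ1_meas hφ1_bdd
  refine le_fiberInf hπ_surj fun z hz => ?_
  rw [kernelIterMeasure_eq_pow, ← hz, ← Kernel.map_pow_apply_eq_pow_apply hπ_meas h_intertwine,
    kernelBirkhoffSum_add κh hφ1_meas hφ1_bdd]
  exact add_le_add (fiberInf_le (bddBelow_range_of_abs_le (hbdd n)) z)
    (integral_fiberInf_map_le hπ_meas hπ_surj (hmeas m) (hbdd m) (hφbar_meas m))

/-- The fiberwise minimization of a `κ̂`-additive process is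
`κ`-superadditive (dual version of the fiberwise-maximum subadditivity theorem). -/
theorem fiberwise_inf_is_superadditive
    {Xh X : Type*} [MeasurableSpace Xh] [MeasurableSpace X]
    (π : Xh → X) (hπ_meas : Measurable π) (hπ_surj : Function.Surjective π)
    (κh : Kernel Xh Xh) [IsMarkovKernel κh]
    (κ : Kernel X X) [IsMarkovKernel κ]
    (h_intertwine : ∀ z : Xh, (κh z).map π = κ (π z))
    (φ1 : Xh → ℝ) (hφ1_meas : Measurable φ1)
    (C : ℝ) (hφ1_bdd : ∀ z, |φ1 z| ≤ C)
    (φh : ℕ → Xh → ℝ)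
    (hφh : ∀ n z, φh n z = ∑ j ∈ Finset.range n, kernelOpIter κh j φ1 z)
    (φbar : ℕ → X → ℝ)
    (hφbar : ∀ n x, φbar n x = sInf (φh n '' (π ⁻¹' {x})))
    (hφbar_meas : ∀ n, Measurable (φbar n)) :
    ∀ n m : ℕ, 1 ≤ n → 1 ≤ m → ∀ x : X,
      φbar (n + m) x ≥ φbar n x + ∫ y, φbar m y ∂(kernelIterMeasure κ n x) :=
  fiberwise_inf_is_superadditive_general π hπ_meas hπ_surj κh κ h_intertwine φ1 hφ1_meas C hφ1_bdd
    φh hφh φbar hφbar hφbar_meas
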